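/- Let T be a string and suppose for nonempty string w the deepest matching node for w (the longest factor of the form w[1]^e·w among prefixes of run-boundary suffixes of T) exists for every factor w of T. Then for each k, the map sending each w ∈ Substr_T(k) to its deepest matching node is injective, and its inverse on the image sends a node v to the length-k suffix of str(v). Hence |Substr_T(k)| = |D_k|, where D_k is the set of deepest matching nodes for length-k factors of T. -/
import Mathlib


/-- The set of distinct substrings (contiguous factors) of `T` of length `k`. -/
def Substr {α : Type*} (T : List α) (k : ℕ) : Set (List α) :=
  {w | w.length = k ∧ w <:+: T}

/-- The r-suffix trie of `T`: prefixes of suffixes starting at run boundaries. -/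
def RTrie {α : Type*} (T : List α) : Set (List α) :=
  {p | ∃ i, i < T.length ∧ (i = 0 ∨ T[i-1]? ≠ T[i]?) ∧ p <+: T.drop i}

/-- `v` is the deepest matching node for `w` in the r-suffix trie of `T`. -/
def DMN {α : Type*} [Inhabited α] (T w v : List α) : Prop :=
  v ∈ RTrie T ∧ (∃ e : ℕ, v = List.replicate e w.headI ++ w) ∧
    ∀ u ∈ RTrie T, (∃ e : ℕ, u = List.replicate e w.headI ++ w) → u.length ≤ v.length

lemma drop_of_rep {α : Type*} (w v : List α) (a : α) (e : ℕ)
    (hv : v = List.replicate e a ++ w) : v.drop (v.length - w.length) = w := by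
  subst hv
  simp [List.length_append, List.drop_append]

/-- The map sending each `w ∈ Substr_T(k)` to its deepest matching node is
injective with inverse the length-`k` suffix, hence `|Substr_T(k)| = |D_k|`. -/
theorem stmt12 {α : Type*} [Inhabited α] (T : List α) (k : ℕ) (hk : 1 ≤ k)
    (dm : List α → List α)
    (hdm : ∀ w ∈ Substr T k, DMN T w (dm w)) :
    Set.InjOn dm (Substr T k) ∧
    (∀ w ∈ Substr T k, (dm w).drop ((dm w).length - k) = w) ∧
    (Substr T k).ncard = {v | ∃ w ∈ Substr T k, DMN T w v}.ncard := by
  have hinv : ∀ w ∈ Substr T k, (dm w).drop ((dm w).length - k) = w := by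
    intro w hw
    obtain ⟨_, ⟨e, he⟩, _⟩ := hdm w hw
    have := drop_of_rep w (dm w) w.headI e he
    rwa [hw.1] at this
  have hinj : Set.InjOn dm (Substr T k) := by
    intro w hw w' hw' h
    rw [← hinv w hw, ← hinv w' hw', h]
  refine ⟨hinj, hinv, ?_⟩
  have himg : {v | ∃ w ∈ Substr T k, DMN T w v} = dm '' Substr T k := by
    ext v
    constructor
    · rintro ⟨w, hw, hm, ⟨e, he⟩, hmax⟩
      obtain ⟨hm', ⟨e', he'⟩, hmax'⟩ := hdm w hw
      refine ⟨w, hw, ?_⟩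
      have h1 := hmax (dm w) hm' ⟨e', he'⟩
      have h2 := hmax' v hm ⟨e, he⟩
      have hlen : (dm w).length = v.length := le_antisymm h1 h2
      rw [he, he'] at hlen ⊢
      simp only [List.length_append, List.length_replicate] at hlen
      have : e' = e := by omega
      rw [this]
    · rintro ⟨w, hw, rfl⟩
      exact ⟨w, hw, hdm w hw⟩
  rw [himg]
  exact (Set.ncard_image_of_injOn hinj).symm
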